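/- arXiv:2507.07655 — 2 statements merged into one kernel-verified Lean document; each statement's English description precedes it below -/
import Mathlib

section
/- Let q₁, q₂ : (0, a] → ℝ be smooth functions such that q₁'(s) + q₁(s)² ≤ q₂'(s) + q₂(s)² for all s ∈ (0, a], where both q_i'(s) + q_i(s)² extend smoothly to [0, a]. If lim_{s→0⁺} (q₂(s) - q₁(s)) = 0, then q₁(s) ≤ q₂(s) for all s ∈ (0, a]. -/
open Set Filter Topology intervalIntegral

lemma riccati_lower_bound {a : ℝ} {q : ℝ → ℝ} (hq : ContDiffOn ℝ (⊤ : ℕ∞) q (Ioc 0 a))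
    {M : ℝ} (hM : 1 ≤ M) (hbound : ∀ s ∈ Ioc (0:ℝ) a, deriv q s + q s ^ 2 ≤ M)
    {b : ℝ} (hb : b ∈ Ioo (0:ℝ) a) :
    -3 / min (a - b) (Real.sqrt (2 / M)) ≤ q b := by
  have hM0 : (0:ℝ) < M := lt_of_lt_of_le one_pos hM
  have hsq : 0 < Real.sqrt (2 / M) := Real.sqrt_pos.2 (by positivity)
  set δ := min (a - b) (Real.sqrt (2 / M)) with hδdef
  have hδ : 0 < δ := lt_min (by linarith [hb.2]) hsq
  have hδsq : δ ^ 2 ≤ 2 / M := by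
    have h1 : δ ≤ Real.sqrt (2 / M) := min_le_right _ _
    calc δ ^ 2 ≤ Real.sqrt (2 / M) ^ 2 := by nlinarith
      _ = 2 / M := Real.sq_sqrt (by positivity)
  set T := b + δ with hT
  have hTa : T ≤ a := by
    have := min_le_left (a - b) (Real.sqrt (2 / M)); simp only [hT]
    have : δ ≤ a - b := this
    linarith
  have hbT : b < T := by simp [hT]; linarith
  by_contra hcon
  push_neg at hcon
  -- hcon : q b < -3 / δ
  have hsub : Icc b T ⊆ Ioc 0 a := fun x hx => ⟨lt_of_lt_of_le hb.1 hx.1, le_trans hx.2 hTa⟩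
  have hqc : ContinuousOn q (Icc b T) := hq.continuousOn.mono hsub
  obtain ⟨x₀, hx₀, hmin'⟩ := isCompact_Icc.exists_isMinOn (nonempty_Icc.2 hbT.le) hqc
  have hmin : ∀ x ∈ Icc b T, q x₀ ≤ q x := fun x hx => isMinOn_iff.mp hmin' x hx
  set m := q x₀ with hm
  set η := min (δ / 2) (3 / (1 + |m|)) with hη
  have hηpos : 0 < η := lt_min (by linarith) (by positivity)
  have hηδ : η < δ := lt_of_le_of_lt (min_le_left _ _) (by linarith)
  set y := T - η with hy
  have hby : b < y := by simp [hy, hT]; linarith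
  have hyT : y < T := by simp [hy]; linarith
  -- derivative of q at interior points
  have hdq : ∀ x, x ∈ Ioo (0:ℝ) a → HasDerivAt q (deriv q x) x := by
    intro x hx
    have hmem : Ioc (0:ℝ) a ∈ 𝓝 x :=
      Filter.mem_of_superset (isOpen_Ioo.mem_nhds hx) Ioo_subset_Ioc_self
    exact (((hq.differentiableOn (by simp)) x (Ioo_subset_Ioc_self hx)).differentiableAt
      hmem).hasDerivAt
  -- barrier
  set B : ℝ → ℝ := fun x => -3 * (T - x)⁻¹ with hB
  have hBderiv : ∀ x, x < T → HasDerivAt B (-3 * ((T - x) ^ 2)⁻¹) x := by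
    intro x hx
    have h0 : T - x ≠ 0 := by intro h; linarith [sub_eq_zero.mp h]
    have h1 : HasDerivAt (fun y => T - y) (-1) x := by
      simpa using (hasDerivAt_id x).const_sub T
    have h2 := (h1.inv h0).const_mul (-3)
    convert h2 using 1
    exacts [rfl, rfl, rfl, by ring]
  have hf1 : ContinuousOn q (Icc b y) := hqc.mono (Icc_subset_Icc le_rfl hyT.le)
  have hf2 : ∀ x ∈ Ico b y, HasDerivWithinAt q (deriv q x) (Ici x) x := by
    intro x hx
    have hxI : x ∈ Ioo (0:ℝ) a :=
      ⟨lt_of_lt_of_le hb.1 hx.1, lt_of_lt_of_le (hx.2.trans hyT) hTa⟩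
    exact (hdq x hxI).hasDerivWithinAt
  have hf3 : q b ≤ B b := by
    have : B b = -3 / δ := by simp [hB, hT, div_eq_mul_inv]
    rw [this]; exact hcon.le
  have hf4 : ContinuousOn B (Icc b y) := by
    apply ContinuousOn.mul continuousOn_const
    apply ContinuousOn.inv₀
    · exact continuousOn_const.sub continuousOn_id
    · intro x hx
      have hxT : x < T := lt_of_le_of_lt hx.2 hyT
      intro h; rw [sub_eq_zero] at h; linarith
  have hf5 : ∀ x ∈ Ico b y, HasDerivWithinAt B (-3 * ((T - x) ^ 2)⁻¹) (Ici x) x := by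
    intro x hx
    exact (hBderiv x (hx.2.trans hyT)).hasDerivWithinAt
  have hf6 : ∀ x ∈ Ico b y, q x = B x → deriv q x < -3 * ((T - x) ^ 2)⁻¹ := by
    intro x hx hqx
    have hxI : x ∈ Ioc (0:ℝ) a :=
      ⟨lt_of_lt_of_le hb.1 hx.1, le_trans (hx.2.trans hyT).le hTa⟩
    have h1 : deriv q x + q x ^ 2 ≤ M := hbound x hxI
    have hTx : 0 < T - x := by
      have : x < T := hx.2.trans hyT; linarith
    have hTxδ : T - x ≤ δ := by
      have : b ≤ x := hx.1; simp [hT]; linarith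
    have hq2 : q x ^ 2 = 9 * ((T - x) ^ 2)⁻¹ := by
      rw [hqx]; simp [hB]; field_simp; ring
    have hMTx : M * (T - x) ^ 2 ≤ 2 := by
      have h2 : (T - x) ^ 2 ≤ δ ^ 2 := by nlinarith
      have h3 : (T - x) ^ 2 ≤ 2 / M := le_trans h2 hδsq
      calc M * (T - x) ^ 2 ≤ M * (2 / M) := by nlinarith
        _ = 2 := by field_simp
    have h4 : deriv q x ≤ M - 9 * ((T - x) ^ 2)⁻¹ := by rw [← hq2]; linarith
    have h5 : M - 9 * ((T - x) ^ 2)⁻¹ < -3 * ((T - x) ^ 2)⁻¹ := by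
      rw [sub_lt_iff_lt_add]
      have hpos : (0:ℝ) < ((T - x) ^ 2)⁻¹ := by positivity
      rw [show (-3 : ℝ) * ((T - x) ^ 2)⁻¹ + 9 * ((T - x) ^ 2)⁻¹
          = 6 * ((T - x) ^ 2)⁻¹ by ring]
      rw [show (6:ℝ) * ((T - x) ^ 2)⁻¹ = 6 / (T - x) ^ 2 by rw [div_eq_mul_inv]]
      rw [lt_div_iff₀ (by positivity)]
      nlinarith
    linarith
  have hcomp : ∀ x ∈ Icc b y, q x ≤ B x := fun x hx =>
    image_le_of_deriv_right_lt_deriv_boundary' hf1 hf2 hf3 hf4 hf5 hf6 hx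
  -- contradiction : q y ≤ B y = -3/η < m ≤ q y
  have hqy := hcomp y ⟨hby.le, le_rfl⟩
  have hBy : B y = -3 / η := by simp [hB, hy, div_eq_mul_inv]
  have hηm : 3 / η ≥ 1 + |m| := by
    have h1 : η ≤ 3 / (1 + |m|) := min_le_right _ _
    rw [ge_iff_le, le_div_iff₀ hηpos]
    calc (1 + |m|) * η ≤ (1 + |m|) * (3 / (1 + |m|)) := by
          apply mul_le_mul_of_nonneg_left h1 (by positivity)
      _ = 3 := by field_simp
  have hmy : m ≤ q y := hmin y ⟨hby.le, hyT.le⟩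
  have : q y < m := by
    rw [hBy] at hqy
    have : -3 / η ≤ -(1 + |m|) := by
      rw [neg_div]; linarith
    have h2 : -(1 + |m|) < m := by
      have := abs_nonneg m
      have := neg_abs_le m
      linarith
    linarith
  linarith

/-- Scalar Riccati comparison: if `q₁' + q₁² ≤ q₂' + q₂²` on `(0,a]`, both sides extend
smoothly to `[0,a]`, and `q₂ - q₁ → 0` as `s → 0⁺`, then `q₁ ≤ q₂` on `(0,a]`. -/
theorem stmt3 (a : ℝ) (ha : 0 < a) (q₁ q₂ : ℝ → ℝ)
    (h₁ : ContDiffOn ℝ (⊤ : ℕ∞) q₁ (Ioc 0 a)) (h₂ : ContDiffOn ℝ (⊤ : ℕ∞) q₂ (Ioc 0 a))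
    (hext₁ : ∃ f : ℝ → ℝ, ContDiffOn ℝ (⊤ : ℕ∞) f (Icc 0 a) ∧
      ∀ s ∈ Ioc (0:ℝ) a, f s = deriv q₁ s + q₁ s ^ 2)
    (hext₂ : ∃ f : ℝ → ℝ, ContDiffOn ℝ (⊤ : ℕ∞) f (Icc 0 a) ∧
      ∀ s ∈ Ioc (0:ℝ) a, f s = deriv q₂ s + q₂ s ^ 2)
    (hle : ∀ s ∈ Ioc (0:ℝ) a, deriv q₁ s + q₁ s ^ 2 ≤ deriv q₂ s + q₂ s ^ 2)
    (hlim : Tendsto (fun s => q₂ s - q₁ s) (𝓝[>] (0:ℝ)) (𝓝 0)) :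
    ∀ s ∈ Ioc (0:ℝ) a, q₁ s ≤ q₂ s := by
  obtain ⟨f₁, hf₁c, hf₁⟩ := hext₁
  obtain ⟨f₂, hf₂c, hf₂⟩ := hext₂
  set u : ℝ → ℝ := fun s => q₂ s - q₁ s with hu
  set p : ℝ → ℝ := fun s => q₁ s + q₂ s with hp
  have hpc : ContinuousOn p (Ioc 0 a) := h₁.continuousOn.add h₂.continuousOn
  -- derivatives at interior points
  have hdq₁ : ∀ x, x ∈ Ioo (0:ℝ) a → HasDerivAt q₁ (deriv q₁ x) x := by
    intro x hx
    have hmem : Ioc (0:ℝ) a ∈ 𝓝 x :=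
      Filter.mem_of_superset (isOpen_Ioo.mem_nhds hx) Ioo_subset_Ioc_self
    exact (((h₁.differentiableOn (by simp)) x (Ioo_subset_Ioc_self hx)).differentiableAt
      hmem).hasDerivAt
  have hdq₂ : ∀ x, x ∈ Ioo (0:ℝ) a → HasDerivAt q₂ (deriv q₂ x) x := by
    intro x hx
    have hmem : Ioc (0:ℝ) a ∈ 𝓝 x :=
      Filter.mem_of_superset (isOpen_Ioo.mem_nhds hx) Ioo_subset_Ioc_self
    exact (((h₂.differentiableOn (by simp)) x (Ioo_subset_Ioc_self hx)).differentiableAt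
      hmem).hasDerivAt
  -- a uniform bound M for both extensions
  obtain ⟨z₁, _, hz₁⟩ := isCompact_Icc.exists_isMaxOn (nonempty_Icc.2 ha.le) hf₁c.continuousOn
  obtain ⟨z₂, _, hz₂⟩ := isCompact_Icc.exists_isMaxOn (nonempty_Icc.2 ha.le) hf₂c.continuousOn
  set M : ℝ := max (max (f₁ z₁) (f₂ z₂)) 1 with hM
  have hM1 : (1:ℝ) ≤ M := le_max_right _ _
  have hbound₁ : ∀ s ∈ Ioc (0:ℝ) a, deriv q₁ s + q₁ s ^ 2 ≤ M := by
    intro s hs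
    rw [← hf₁ s hs]
    exact le_trans (isMaxOn_iff.mp hz₁ s (Ioc_subset_Icc_self hs))
      (le_trans (le_max_left _ _) (le_max_left _ _))
  have hbound₂ : ∀ s ∈ Ioc (0:ℝ) a, deriv q₂ s + q₂ s ^ 2 ≤ M := by
    intro s hs
    rw [← hf₂ s hs]
    exact le_trans (isMaxOn_iff.mp hz₂ s (Ioc_subset_Icc_self hs))
      (le_trans (le_max_right _ _) (le_max_left _ _))
  -- uniform lower bound for q₁ + q₂ on (0, a]
  have hlower : ∃ K : ℝ, 0 ≤ K ∧ ∀ x ∈ Ioc (0:ℝ) a, -K ≤ p x := by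
    set δ₀ : ℝ := min (a / 2) (Real.sqrt (2 / M)) with hδ₀
    have hM0 : (0:ℝ) < M := lt_of_lt_of_le one_pos hM1
    have hδ₀pos : 0 < δ₀ := lt_min (by linarith) (Real.sqrt_pos.2 (by positivity))
    -- compact bounds on [a/2, a]
    have hsub2 : Icc (a/2) a ⊆ Ioc 0 a := fun x hx => ⟨lt_of_lt_of_le (by linarith) hx.1, hx.2⟩
    obtain ⟨w₁, _, hw₁⟩ := isCompact_Icc.exists_isMinOn (nonempty_Icc.2 (by linarith))
      (h₁.continuousOn.mono hsub2)
    obtain ⟨w₂, _, hw₂⟩ := isCompact_Icc.exists_isMinOn (nonempty_Icc.2 (by linarith))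
      (h₂.continuousOn.mono hsub2)
    refine ⟨max (6 / δ₀) (|q₁ w₁| + |q₂ w₂|), le_trans (by positivity) (le_max_left _ _), ?_⟩
    intro x hx
    rcases le_or_gt x (a/2) with hxa | hxa
    · -- use the barrier lemma
      have hxIoo : x ∈ Ioo (0:ℝ) a := ⟨hx.1, lt_of_le_of_lt hxa (by linarith)⟩
      have hb₁ := riccati_lower_bound h₁ hM1 hbound₁ hxIoo
      have hb₂ := riccati_lower_bound h₂ hM1 hbound₂ hxIoo
      have hδx : δ₀ ≤ min (a - x) (Real.sqrt (2 / M)) := by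
        apply le_min _ (min_le_right _ _)
        exact le_trans (min_le_left _ _) (by linarith)
      have hδxpos : 0 < min (a - x) (Real.sqrt (2 / M)) := lt_of_lt_of_le hδ₀pos hδx
      have h3 : -3 / δ₀ ≤ -3 / min (a - x) (Real.sqrt (2 / M)) := by
        rw [neg_div, neg_div, neg_le_neg_iff]
        exact div_le_div_of_nonneg_left (by norm_num) hδ₀pos hδx
      have : -(6 / δ₀) ≤ p x := by
        have e : -(6 / δ₀) = -3 / δ₀ + -3 / δ₀ := by ring
        rw [e, hp]
        exact add_le_add (le_trans h3 hb₁) (le_trans h3 hb₂)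
      exact le_trans (neg_le_neg (le_max_left _ _)) this
    · have hxI : x ∈ Icc (a/2) a := ⟨hxa.le, hx.2⟩
      have h1 : q₁ w₁ ≤ q₁ x := isMinOn_iff.mp hw₁ x hxI
      have h2 : q₂ w₂ ≤ q₂ x := isMinOn_iff.mp hw₂ x hxI
      have : -(|q₁ w₁| + |q₂ w₂|) ≤ p x := by
        have := neg_abs_le (q₁ w₁)
        have := neg_abs_le (q₂ w₂)
        simp only [hp]
        push_cast
        linarith
      exact le_trans (neg_le_neg (le_max_right _ _)) this
  obtain ⟨K, hK0, hKp⟩ := hlower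
  -- main argument
  intro s₀ hs₀
  rw [← sub_nonneg]
  by_contra hcon
  push_neg at hcon
  -- hcon : q₂ s₀ - q₁ s₀ < 0
  have hus₀ : u s₀ < 0 := hcon
  -- Grönwall-type key inequality
  have key : ∀ t ∈ Ioo (0:ℝ) s₀, u t ≤ u s₀ * Real.exp (∫ x in t..s₀, p x) := by
    intro t ht
    have hts : t < s₀ := ht.2
    have hsub : Icc t s₀ ⊆ Ioc 0 a := fun x hx => ⟨lt_of_lt_of_le ht.1 hx.1, le_trans hx.2 hs₀.2⟩
    have hsubo : Ioo t s₀ ⊆ Ioo 0 a := fun x hx =>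
      ⟨lt_trans ht.1 hx.1, lt_of_lt_of_le hx.2 hs₀.2⟩
    set G : ℝ → ℝ := fun x => ∫ τ in t..x, p τ with hG
    set w : ℝ → ℝ := fun x => u x * Real.exp (G x) with hw
    have hpint : MeasureTheory.IntegrableOn p (uIcc t s₀) := by
      rw [uIcc_of_le hts.le]
      exact (hpc.mono hsub).integrableOn_compact isCompact_Icc
    have hGc : ContinuousOn G (Icc t s₀) := by
      have := intervalIntegral.continuousOn_primitive_interval hpint
      rwa [uIcc_of_le hts.le] at this
    have hwc : ContinuousOn w (Icc t s₀) :=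
      ((h₂.continuousOn.mono hsub).sub (h₁.continuousOn.mono hsub)).mul hGc.rexp
    have hwd : ∀ x ∈ Ioo t s₀, HasDerivAt w
        ((deriv q₂ x - deriv q₁ x) * Real.exp (G x) + u x * (Real.exp (G x) * p x)) x := by
      intro x hx
      have hxo : x ∈ Ioo (0:ℝ) a := hsubo hx
      have hG' : HasDerivAt G (p x) x := by
        apply intervalIntegral.integral_hasDerivAt_right
        · apply ContinuousOn.intervalIntegrable
          apply hpc.mono
          refine subset_trans ?_ hsub
          rw [uIcc_of_le hx.1.le]
          exact Icc_subset_Icc le_rfl hx.2.le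
        · exact (hpc.mono (Ioo_subset_Ioc_self : Ioo (0:ℝ) a ⊆ Ioc 0 a)).stronglyMeasurableAtFilter
            isOpen_Ioo x hxo
        · exact (hpc.mono (Ioo_subset_Ioc_self : Ioo (0:ℝ) a ⊆ Ioc 0 a)).continuousAt
            (isOpen_Ioo.mem_nhds hxo)
      exact ((hdq₂ x hxo).sub (hdq₁ x hxo)).mul hG'.exp
    have hmono : MonotoneOn w (Icc t s₀) := by
      apply monotoneOn_of_deriv_nonneg (convex_Icc t s₀) hwc
      · intro x hx
        rw [interior_Icc] at hx
        exact (hwd x hx).differentiableAt.differentiableWithinAt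
      · intro x hx
        rw [interior_Icc] at hx
        rw [(hwd x hx).deriv]
        have hxo : x ∈ Ioo (0:ℝ) a := hsubo hx
        have h0 := hle x (Ioo_subset_Ioc_self hxo)
        have hexp : 0 < Real.exp (G x) := Real.exp_pos _
        have halg : (deriv q₂ x - deriv q₁ x) * Real.exp (G x)
            + u x * (Real.exp (G x) * p x)
            = Real.exp (G x) * ((deriv q₂ x + q₂ x ^ 2) - (deriv q₁ x + q₁ x ^ 2)) := by
          simp only [hu, hp]; ring
        rw [halg]
        have : (0:ℝ) ≤ (deriv q₂ x + q₂ x ^ 2) - (deriv q₁ x + q₁ x ^ 2) := by linarith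
        positivity
    have h1 : w t ≤ w s₀ :=
      hmono ⟨le_rfl, hts.le⟩ ⟨hts.le, le_rfl⟩ hts.le
    have hGt : G t = 0 := intervalIntegral.integral_same
    simpa [hw, hGt] using h1
  -- lower bound for the integral
  have hintlb : ∀ t ∈ Ioo (0:ℝ) s₀, -(K * a) ≤ ∫ x in t..s₀, p x := by
    intro t ht
    have hts : t < s₀ := ht.2
    have hsub : Icc t s₀ ⊆ Ioc 0 a := fun x hx => ⟨lt_of_lt_of_le ht.1 hx.1, le_trans hx.2 hs₀.2⟩
    have hpint : IntervalIntegrable p MeasureTheory.volume t s₀ :=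
      (hpc.mono hsub).intervalIntegrable_of_Icc hts.le
    have h1 : ∫ x in t..s₀, (-K : ℝ) ≤ ∫ x in t..s₀, p x := by
      apply intervalIntegral.integral_mono_on hts.le intervalIntegrable_const hpint
      intro x hx
      exact hKp x (hsub hx)
    rw [intervalIntegral.integral_const, smul_eq_mul] at h1
    have h2 : -(K * a) ≤ (s₀ - t) * (-K) := by
      have hst : s₀ - t ≤ a := by
        have := hs₀.2; have := ht.1; linarith
      nlinarith
    linarith
  -- combine: u t is bounded away from 0 near 0
  have hfinal : ∀ t ∈ Ioo (0:ℝ) s₀, u t ≤ u s₀ * Real.exp (-(K * a)) := by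
    intro t ht
    have h1 := key t ht
    have h2 : Real.exp (-(K * a)) ≤ Real.exp (∫ x in t..s₀, p x) :=
      Real.exp_le_exp.2 (hintlb t ht)
    have h3 : u s₀ * Real.exp (∫ x in t..s₀, p x) ≤ u s₀ * Real.exp (-(K * a)) :=
      mul_le_mul_of_nonpos_left h2 hus₀.le
    linarith
  -- contradiction with the limit
  have hc : u s₀ * Real.exp (-(K * a)) < 0 :=
    mul_neg_of_neg_of_pos hus₀ (Real.exp_pos _)
  have hev1 : ∀ᶠ t in 𝓝[>] (0:ℝ), u s₀ * Real.exp (-(K * a)) < u t :=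
    hlim.eventually_const_lt hc
  have hev2 : ∀ᶠ t in 𝓝[>] (0:ℝ), t ∈ Ioo (0:ℝ) s₀ :=
    Ioo_mem_nhdsGT_of_mem ⟨le_rfl, hs₀.1⟩
  obtain ⟨t, ht1, ht2⟩ := (hev1.and hev2).exists
  exact absurd (hfinal t ht2) (not_le.2 ht1)
end

section
/- Let q₁, q₂ : (0, a] → ℝ be smooth functions such that q₁'(s) + q₁(s)² ≤ q₂'(s) + q₂(s)² for all s ∈ (0, a], where both q_i'(s) + q_i(s)² extend smoothly to [0, a], and suppose lim_{s→0⁺} (q₂(s) - q₁(s)) = 0. If in addition q₁(a) = q₂(a), then q₁(s) = q₂(s) for all s ∈ (0, a]. -/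
open Set Filter Topology MeasureTheory intervalIntegral

lemma intInt {a : ℝ} {h : ℝ → ℝ} (hc : ContinuousOn h (Ioc 0 a)) {s : ℝ}
    (hs : s ∈ Ioc (0:ℝ) a) : IntervalIntegrable h MeasureTheory.volume s a := by
  apply ContinuousOn.intervalIntegrable
  apply hc.mono
  rw [uIcc_of_le hs.2]
  exact fun x hx => ⟨lt_of_lt_of_le hs.1 hx.1, hx.2⟩

lemma hasDerivQ {a : ℝ} {h : ℝ → ℝ} (hc : ContinuousOn h (Ioc 0 a)) {s : ℝ}
    (hs : s ∈ Ioo (0:ℝ) a) :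
    HasDerivAt (fun t => ∫ x in t..a, h x) (-(h s)) s := by
  have hIoo : ContinuousOn h (Ioo 0 a) := hc.mono Ioo_subset_Ioc_self
  exact integral_hasDerivAt_left (intInt hc ⟨hs.1, hs.2.le⟩)
    (hIoo.stronglyMeasurableAtFilter isOpen_Ioo s hs)
    (hIoo.continuousAt (Ioo_mem_nhds hs.1 hs.2))

lemma contQ {a : ℝ} {h : ℝ → ℝ} (hc : ContinuousOn h (Ioc 0 a)) {b : ℝ}
    (hb : b ∈ Ioc (0:ℝ) a) :
    ContinuousOn (fun t => ∫ x in t..a, h x) (Icc b a) := by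
  have hint : IntegrableOn h (uIcc b a) := by
    rw [uIcc_of_le hb.2]
    exact (hc.mono (fun x hx => ⟨lt_of_lt_of_le hb.1 hx.1, hx.2⟩)).integrableOn_compact
      isCompact_Icc
  have := continuousOn_primitive_interval_left hint
  rwa [uIcc_of_le hb.2] at this
lemma key_bound {a : ℝ} (ha : 0 < a) {q : ℝ → ℝ}
    (hq : ContDiffOn ℝ (⊤ : ℕ∞) q (Ioc 0 a))
    (hC' : ∃ C : ℝ, ∀ s ∈ Ioo (0:ℝ) a, deriv q s + q s ^ 2 ≤ C) :
    ∃ K : ℝ, ∀ s ∈ Ioc (0:ℝ) a, -K ≤ ∫ t in s..a, q t := by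
  obtain ⟨C₀, hC₀⟩ := hC'
  set C := max C₀ 0 with hCdef
  have hC0 : 0 ≤ C := le_max_right _ _
  have hC : ∀ s ∈ Ioo (0:ℝ) a, deriv q s + q s ^ 2 ≤ C :=
    fun s hs => (hC₀ s hs).trans (le_max_left _ _)
  set p := Real.sqrt C with hpdef
  have hp0 : 0 ≤ p := Real.sqrt_nonneg _
  have hp2 : p ^ 2 = C := Real.sq_sqrt hC0
  have hqc : ContinuousOn q (Ioc 0 a) := hq.continuousOn
  set Q : ℝ → ℝ := fun t => ∫ x in t..a, q x with hQdef
  set g : ℝ → ℝ := fun t => Real.exp (-(Q t)) with hgdef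
  set G : ℝ → ℝ := fun t => Real.exp (p * t) * (g t * (q t - p)) with hGdef
  have hgpos : ∀ t, 0 < g t := fun t => Real.exp_pos _
  -- derivative facts on Ioo
  have hqd : ∀ s ∈ Ioo (0:ℝ) a, HasDerivAt q (deriv q s) s := by
    intro s hs
    have : DifferentiableAt ℝ q s :=
      (hq.differentiableOn (by simp)).differentiableAt (Ioc_mem_nhds hs.1 hs.2)
    exact this.hasDerivAt
  have hgd : ∀ s ∈ Ioo (0:ℝ) a, HasDerivAt g (g s * q s) s := by
    intro s hs
    have hQd : HasDerivAt Q (-(q s)) s := hasDerivQ hqc hs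
    have := (hQd.neg).exp
    simpa [hgdef, neg_neg] using this
  have hGd : ∀ s ∈ Ioo (0:ℝ) a,
      HasDerivAt G (Real.exp (p * s) * (g s * (deriv q s + q s ^ 2 - p ^ 2))) s := by
    intro s hs
    have hA : HasDerivAt (fun t => Real.exp (p * t)) (Real.exp (p * s) * p) s := by
      have := ((hasDerivAt_id s).const_mul p).exp
      simpa using this
    have hB : HasDerivAt (fun t => g t * (q t - p))
        (g s * q s * (q s - p) + g s * (deriv q s)) s := by
      have := (hgd s hs).mul ((hqd s hs).sub_const p)
      exact this
    have := hA.mul hB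
    exact this.congr_deriv (by ring)
  -- G is antitone on Icc s₀ a for s₀ ∈ Ioc 0 a
  have hGcont : ∀ s₀ ∈ Ioc (0:ℝ) a, ContinuousOn G (Icc s₀ a) := by
    intro s₀ hs₀
    have hsub : Icc s₀ a ⊆ Ioc 0 a := fun x hx => ⟨lt_of_lt_of_le hs₀.1 hx.1, hx.2⟩
    have hQc : ContinuousOn Q (Icc s₀ a) := contQ hqc hs₀
    exact (Real.continuous_exp.comp (continuous_const.mul continuous_id)).continuousOn.mul
      (((Real.continuous_exp.comp_continuousOn hQc.neg)).mul
        ((hqc.mono hsub).sub continuousOn_const))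
  have hGanti : ∀ s₀ ∈ Ioc (0:ℝ) a, AntitoneOn G (Icc s₀ a) := by
    intro s₀ hs₀
    apply antitoneOn_of_deriv_nonpos (convex_Icc _ _) (hGcont s₀ hs₀)
    · intro x hx
      rw [interior_Icc] at hx
      have hx' : x ∈ Ioo (0:ℝ) a := ⟨lt_trans hs₀.1 hx.1, hx.2⟩
      exact ((hGd x hx').differentiableAt).differentiableWithinAt
    · intro x hx
      rw [interior_Icc] at hx
      have hx' : x ∈ Ioo (0:ℝ) a := ⟨lt_trans hs₀.1 hx.1, hx.2⟩
      rw [(hGd x hx').deriv]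
      have h1 : deriv q x + q x ^ 2 - p ^ 2 ≤ 0 := by
        rw [hp2]; linarith [hC x hx']
      nlinarith [mul_nonneg (mul_nonneg (Real.exp_pos (p*x)).le (hgpos x).le)
        (neg_nonneg.mpr h1)]
  have hGa : ∀ s₀ ∈ Ioc (0:ℝ) a, G a ≤ G s₀ := by
    intro s₀ hs₀
    exact hGanti s₀ hs₀ (left_mem_Icc.2 hs₀.2) (right_mem_Icc.2 hs₀.2) hs₀.2
  set m : ℝ := min (G a) 0 with hmdef
  have hm0 : m ≤ 0 := min_le_right _ _
  -- deriv of g bounded below by m on Ioo 0 a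
  have hgd_low : ∀ x ∈ Ioo (0:ℝ) a, m ≤ g x * q x := by
    intro x hx
    have hid : g x * q x = Real.exp (-(p * x)) * G x + p * g x := by
      have hmul : Real.exp (-(p * x)) * Real.exp (p * x) = 1 := by
        rw [← Real.exp_add]; simp
      simp only [hGdef]
      linear_combination (-(g x * (q x - p))) * hmul
    rw [hid]
    have hGx : G a ≤ G x := hGa x ⟨hx.1, hx.2.le⟩
    have hpg : 0 ≤ p * g x := mul_nonneg hp0 (hgpos x).le
    have hexp1 : Real.exp (-(p * x)) ≤ 1 := by
      rw [Real.exp_le_one_iff]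
      have : 0 ≤ p * x := mul_nonneg hp0 hx.1.le
      linarith
    have hexppos : 0 < Real.exp (-(p * x)) := Real.exp_pos _
    rcases le_or_gt 0 (G x) with h | h
    · have : 0 ≤ Real.exp (-(p * x)) * G x := mul_nonneg hexppos.le h
      have := min_le_right (G a) 0
      linarith
    · have h1 : G x ≤ Real.exp (-(p * x)) * G x := by nlinarith
      have := min_le_left (G a) 0
      linarith
  -- g bounded above
  have hga : g a = 1 := by simp [hgdef, hQdef, intervalIntegral.integral_same]
  set M : ℝ := 1 + (-m) * a with hMdef
  have hgbound : ∀ s ∈ Ioc (0:ℝ) a, g s ≤ M := by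
    intro s hs
    set φ : ℝ → ℝ := fun t => g t - m * t with hφdef
    have hmono : MonotoneOn φ (Icc s a) := by
      apply monotoneOn_of_deriv_nonneg (convex_Icc _ _)
      · have hQc : ContinuousOn Q (Icc s a) := contQ hqc hs
        exact ((Real.continuous_exp.comp_continuousOn hQc.neg)).sub
          ((continuous_const.mul continuous_id).continuousOn)
      · intro x hx
        rw [interior_Icc] at hx
        have hx' : x ∈ Ioo (0:ℝ) a := ⟨lt_trans hs.1 hx.1, hx.2⟩
        have : HasDerivAt φ (g x * q x - m) x := by
          have := (hgd x hx').sub ((hasDerivAt_id' x).const_mul m)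
          exact this.congr_deriv (by ring)
        exact this.differentiableAt.differentiableWithinAt
      · intro x hx
        rw [interior_Icc] at hx
        have hx' : x ∈ Ioo (0:ℝ) a := ⟨lt_trans hs.1 hx.1, hx.2⟩
        have hd : HasDerivAt φ (g x * q x - m) x := by
          have := (hgd x hx').sub ((hasDerivAt_id' x).const_mul m)
          exact this.congr_deriv (by ring)
        rw [hd.deriv]
        linarith [hgd_low x hx']
    have := hmono (left_mem_Icc.2 hs.2) (right_mem_Icc.2 hs.2) hs.2
    simp only [hφdef] at this
    have hs0 : 0 < s := hs.1
    have hsa : s ≤ a := hs.2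
    rw [hga] at this
    nlinarith
  refine ⟨Real.log M, fun s hs => ?_⟩
  have hMpos : 0 < M := by
    have : 0 ≤ (-m) * a := mul_nonneg (by linarith) ha.le
    simp only [hMdef]; linarith
  have h1 : Real.exp (-(Q s)) ≤ M := hgbound s hs
  have h2 : -(Q s) ≤ Real.log M := by
    have := Real.log_le_log (Real.exp_pos _) h1
    rwa [Real.log_exp] at this
  linarith
/-- Scalar Riccati comparison: if `q₁' + q₁² ≤ q₂' + q₂²` on `(0,a]`, both sides extend
smoothly to `[0,a]`, and `q₂ - q₁ → 0` as `s → 0⁺`, and moreover `q₁ a = q₂ a`, then `q₁ = q₂` on `(0,a]`. -/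
theorem stmt4 (a : ℝ) (ha : 0 < a) (q₁ q₂ : ℝ → ℝ)
    (h₁ : ContDiffOn ℝ (⊤ : ℕ∞) q₁ (Ioc 0 a)) (h₂ : ContDiffOn ℝ (⊤ : ℕ∞) q₂ (Ioc 0 a))
    (hext₁ : ∃ f : ℝ → ℝ, ContDiffOn ℝ (⊤ : ℕ∞) f (Icc 0 a) ∧
      ∀ s ∈ Ioc (0:ℝ) a, f s = deriv q₁ s + q₁ s ^ 2)
    (hext₂ : ∃ f : ℝ → ℝ, ContDiffOn ℝ (⊤ : ℕ∞) f (Icc 0 a) ∧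
      ∀ s ∈ Ioc (0:ℝ) a, f s = deriv q₂ s + q₂ s ^ 2)
    (hle : ∀ s ∈ Ioc (0:ℝ) a, deriv q₁ s + q₁ s ^ 2 ≤ deriv q₂ s + q₂ s ^ 2)
    (hlim : Tendsto (fun s => q₂ s - q₁ s) (𝓝[>] (0:ℝ)) (𝓝 0))
    (heq : q₁ a = q₂ a) :
    ∀ s ∈ Ioc (0:ℝ) a, q₁ s = q₂ s := by
  obtain ⟨f₁, hf₁, hfeq₁⟩ := hext₁
  obtain ⟨f₂, hf₂, hfeq₂⟩ := hext₂
  have hq₁c : ContinuousOn q₁ (Ioc 0 a) := h₁.continuousOn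
  have hq₂c : ContinuousOn q₂ (Ioc 0 a) := h₂.continuousOn
  have hbd : ∀ (f q : ℝ → ℝ), ContDiffOn ℝ (⊤ : ℕ∞) f (Icc 0 a) →
      (∀ s ∈ Ioc (0:ℝ) a, f s = deriv q s + q s ^ 2) →
      ∃ C, ∀ s ∈ Ioo (0:ℝ) a, deriv q s + q s ^ 2 ≤ C := by
    intro f q hf hfeq
    obtain ⟨C, hC⟩ :=
      (isCompact_Icc : IsCompact (Icc (0:ℝ) a)).exists_bound_of_continuousOn hf.continuousOn
    refine ⟨C, fun s hs => ?_⟩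
    rw [← hfeq s ⟨hs.1, hs.2.le⟩]
    exact (le_abs_self _).trans
      (by simpa [Real.norm_eq_abs] using hC s ⟨hs.1.le, hs.2.le⟩)
  obtain ⟨K₁, hK₁⟩ := key_bound ha h₁ (hbd f₁ q₁ hf₁ hfeq₁)
  obtain ⟨K₂, hK₂⟩ := key_bound ha h₂ (hbd f₂ q₂ hf₂ hfeq₂)
  set h : ℝ → ℝ := fun x => q₁ x + q₂ x with hhdef
  have hhc : ContinuousOn h (Ioc 0 a) := hq₁c.add hq₂c
  set Q : ℝ → ℝ := fun t => ∫ x in t..a, h x with hQdef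
  have hQlow : ∀ s ∈ Ioc (0:ℝ) a, -(K₁ + K₂) ≤ Q s := by
    intro s hs
    have hsplit : Q s = (∫ t in s..a, q₁ t) + ∫ t in s..a, q₂ t :=
      intervalIntegral.integral_add (intInt hq₁c hs) (intInt hq₂c hs)
    rw [hsplit]
    linarith [hK₁ s hs, hK₂ s hs]
  set v : ℝ → ℝ := fun t => (q₂ t - q₁ t) * Real.exp (-(Q t)) with hvdef
  have hq₁d : ∀ s ∈ Ioo (0:ℝ) a, HasDerivAt q₁ (deriv q₁ s) s := fun s hs =>
    (((h₁.differentiableOn (by simp)).differentiableAt (Ioc_mem_nhds hs.1 hs.2))).hasDerivAt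
  have hq₂d : ∀ s ∈ Ioo (0:ℝ) a, HasDerivAt q₂ (deriv q₂ s) s := fun s hs =>
    (((h₂.differentiableOn (by simp)).differentiableAt (Ioc_mem_nhds hs.1 hs.2))).hasDerivAt
  have hvd : ∀ s ∈ Ioo (0:ℝ) a, HasDerivAt v
      (((deriv q₂ s + q₂ s ^ 2) - (deriv q₁ s + q₁ s ^ 2)) * Real.exp (-(Q s))) s := by
    intro s hs
    have hQd : HasDerivAt Q (-(h s)) s := hasDerivQ hhc hs
    have hE : HasDerivAt (fun t => Real.exp (-(Q t))) (Real.exp (-(Q s)) * h s) s := by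
      have := (hQd.neg).exp
      simpa using this
    have hu : HasDerivAt (fun t => q₂ t - q₁ t) (deriv q₂ s - deriv q₁ s) s :=
      (hq₂d s hs).sub (hq₁d s hs)
    have := hu.mul hE
    exact this.congr_deriv (by simp only [hhdef]; ring)
  have hvmono : ∀ s₀ ∈ Ioc (0:ℝ) a, MonotoneOn v (Icc s₀ a) := by
    intro s₀ hs₀
    apply monotoneOn_of_deriv_nonneg (convex_Icc _ _)
    · have hsub : Icc s₀ a ⊆ Ioc 0 a := fun x hx => ⟨lt_of_lt_of_le hs₀.1 hx.1, hx.2⟩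
      exact ((hq₂c.mono hsub).sub (hq₁c.mono hsub)).mul
        (Real.continuous_exp.comp_continuousOn (contQ hhc hs₀).neg)
    · intro x hx; rw [interior_Icc] at hx
      have hx' : x ∈ Ioo (0:ℝ) a := ⟨lt_trans hs₀.1 hx.1, hx.2⟩
      exact (hvd x hx').differentiableAt.differentiableWithinAt
    · intro x hx; rw [interior_Icc] at hx
      have hx' : x ∈ Ioo (0:ℝ) a := ⟨lt_trans hs₀.1 hx.1, hx.2⟩
      rw [(hvd x hx').deriv]
      have h0 : 0 ≤ (deriv q₂ x + q₂ x ^ 2) - (deriv q₁ x + q₁ x ^ 2) := by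
        linarith [hle x ⟨hx'.1, hx'.2.le⟩]
      exact mul_nonneg h0 (Real.exp_pos _).le
  have hva : v a = 0 := by simp [hvdef, heq]
  have hvle : ∀ s ∈ Ioc (0:ℝ) a, v s ≤ 0 := by
    intro s hs
    have := hvmono s hs (left_mem_Icc.2 hs.2) (right_mem_Icc.2 hs.2) hs.2
    rwa [hva] at this
  have hvzero : ∀ s ∈ Ioc (0:ℝ) a, v s = 0 := by
    by_contra hcon
    push_neg at hcon
    obtain ⟨s₁, hs₁, hv₁⟩ := hcon
    have hv₁neg : v s₁ < 0 := lt_of_le_of_ne (hvle s₁ hs₁) hv₁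
    set c : ℝ := v s₁ * Real.exp (-(K₁ + K₂)) with hcdef
    have hcneg : c < 0 := mul_neg_of_neg_of_pos hv₁neg (Real.exp_pos _)
    have hub : ∀ s ∈ Ioc (0:ℝ) s₁, q₂ s - q₁ s ≤ c := by
      intro s hs
      have hsIoc : s ∈ Ioc (0:ℝ) a := ⟨hs.1, hs.2.trans hs₁.2⟩
      have hvs : v s ≤ v s₁ := hvmono s hsIoc (left_mem_Icc.2 (hs.2.trans hs₁.2))
        ⟨hs.2, hs₁.2⟩ hs.2
      have hexp : Real.exp (-(K₁ + K₂)) ≤ Real.exp (Q s) :=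
        Real.exp_le_exp.2 (by linarith [hQlow s hsIoc])
      have huv : q₂ s - q₁ s = v s * Real.exp (Q s) := by
        simp only [hvdef]
        rw [mul_assoc, ← Real.exp_add]
        simp
      rw [huv]
      calc v s * Real.exp (Q s) ≤ v s₁ * Real.exp (Q s) :=
            mul_le_mul_of_nonneg_right hvs (Real.exp_pos _).le
        _ ≤ v s₁ * Real.exp (-(K₁ + K₂)) := mul_le_mul_of_nonpos_left hexp hv₁neg.le
    have hev1 : ∀ᶠ s in 𝓝[>] (0:ℝ), q₂ s - q₁ s ≤ c :=
      Filter.eventually_of_mem (Ioc_mem_nhdsGT_of_mem ⟨le_refl 0, hs₁.1⟩) hub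
    have hev2 : ∀ᶠ s in 𝓝[>] (0:ℝ), c < q₂ s - q₁ s :=
      hlim.eventually (eventually_gt_nhds hcneg)
    obtain ⟨s, hle', hgt⟩ := (hev1.and hev2).exists
    linarith
  intro s hs
  have hv0 := hvzero s hs
  simp only [hvdef] at hv0
  rcases mul_eq_zero.1 hv0 with h0 | h0
  · linarith [sub_eq_zero.1 h0]
  · exact absurd h0 (Real.exp_ne_zero _)
end
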